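/- Let (C, C₋, C₊) be a Reedy category, and let Γ be any one of the four categories ∫N(C), ∫N^{-,+}(C), Down_*(C), Down(C). Then the last-component functor last : Γ → C is a weak 1-localization of Γ at the class of last-weak equivalences of Γ: (i) last sends every last-weak equivalence to an isomorphism (indeed an identity); (ii) for every category E and every functor G : Γ → E sending all last-weak equivalences to isomorphisms, there exist a functor H : C → E and a natural isomorphism H ∘ last ≅ G; and (iii) for all functors H, H' : C → E, every natural isomorphism H ∘ last ⇒ H' ∘ last equals θ ▷ last for a unique natural isomorphism θ : H ⇒ H'. -/

import Mathlib

/-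
Every object `P` is joined to the one-point chain on its last vertex by `P.lastIncl`, which
`last` sends to an identity, so the candidate factorization of a functor `G` inverting the
`last`-weak equivalences is `H c := G(pt c)`. On `∫N(C)` every morphism of `C` acts on points,
and `G` identifies `≤`-related morphisms since they agree after the weak equivalence
`Q ⟶ pt(last Q)`. On `∫N^{-,+}(C)` only positive morphisms act on points: a negative
`g : x ⟶ z` is sent to the zigzag `G(pt x) ⟶ G[x → z] ⟵ G(pt z)`, whose backward leg is
inverted, and the images of `C₋` and `C₊` are glued along Reedy factorizations; functoriality
comes from the chain `[x → z → z']`, from commutative squares and, for identities, from the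
collapse `[x → x] ⟶ pt x`. Identity-reflecting chains admit no such collapse, and in `Down(C)`
the `≤`-quotient takes its place. Precomposition with `last` is fully faithful because every
morphism of `C` is a composite of images of `last`; the quotients `Down_*(C)` and `Down(C)`
inherit everything along the quotient functors.
-/

namespace ReedyPaper

open CategoryTheory

universe v₂ u₂ v₁ u₁ v u

variable {C : Type u} [Category.{v} C]

def IsIdMor {x y : C} (f : x ⟶ y) : Prop := ∃ h : x = y, f = eqToHom h

structure ReedyStruct (C : Type u) [Category.{v} C] where
  neg : MorphismProperty C
  pos : MorphismProperty C
  neg_id : ∀ x : C, neg (𝟙 x)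
  pos_id : ∀ x : C, pos (𝟙 x)
  neg_comp : ∀ {x y z : C} (f : x ⟶ y) (g : y ⟶ z), neg f → neg g → neg (f ≫ g)
  pos_comp : ∀ {x y z : C} (f : x ⟶ y) (g : y ⟶ z), pos f → pos g → pos (f ≫ g)
  factor_existsUnique : ∀ {x y : C} (f : x ⟶ y),
    ∃! t : Σ z : C, (x ⟶ z) × (z ⟶ y), neg t.2.1 ∧ pos t.2.2 ∧ t.2.1 ≫ t.2.2 = f
  wf : WellFounded (fun x y : C =>
    (∃ f : x ⟶ y, pos f ∧ ¬ IsIdMor f) ∨ (∃ f : y ⟶ x, neg f ∧ ¬ IsIdMor f))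

structure ChainObj (C : Type u) [Category.{v} C] where
  n : ℕ
  X : Fin (n + 1) ⥤ C

structure ChainHom (P Q : ChainObj C) where
  α : Fin (P.n + 1) →o Fin (Q.n + 1)
  θ : ∀ i : Fin (P.n + 1), P.X.obj i ⟶ Q.X.obj (α i)
  natural : ∀ {i j : Fin (P.n + 1)} (h : i ≤ j),
    P.X.map (homOfLE h) ≫ θ j = θ i ≫ Q.X.map (homOfLE (α.monotone h))

theorem ChainHom.ext' {P Q : ChainObj C} {f g : ChainHom P Q}
    (hα : f.α = g.α) (hθ : HEq f.θ g.θ) : f = g := by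
  cases f; cases g; cases hα; cases hθ; rfl

def ChainHom.id (P : ChainObj C) : ChainHom P P where
  α := OrderHom.id
  θ i := 𝟙 _
  natural h := by
    show P.X.map (homOfLE h) ≫ 𝟙 _ = 𝟙 _ ≫ P.X.map (homOfLE h)
    rw [Category.comp_id, Category.id_comp]

def ChainHom.comp {P Q S : ChainObj C} (f : ChainHom P Q) (g : ChainHom Q S) :
    ChainHom P S where
  α := g.α.comp f.α
  θ i := f.θ i ≫ g.θ (f.α i)
  natural {i j} h := by
    show P.X.map (homOfLE h) ≫ f.θ j ≫ g.θ (f.α j) =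
      (f.θ i ≫ g.θ (f.α i)) ≫ S.X.map (homOfLE (g.α.monotone (f.α.monotone h)))
    rw [← Category.assoc, f.natural h, Category.assoc, g.natural (f.α.monotone h),
      ← Category.assoc]

instance : Category (ChainObj C) where
  Hom := ChainHom
  id := ChainHom.id
  comp := ChainHom.comp
  id_comp f := ChainHom.ext' rfl (heq_of_eq (funext fun i => Category.id_comp _))
  comp_id f := ChainHom.ext' rfl (heq_of_eq (funext fun i => Category.comp_id _))
  assoc f g h := ChainHom.ext' rfl (heq_of_eq (funext fun i => Category.assoc _ _ _))

/-- The partial order on the hom-sets of `∫N(C)` (and of `∫N^{-,+}(C)`):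
`(α, θ) ≤ (α', θ')` iff `α ≤ α'` pointwise and `θ'ᵢ = Y(α(i) ≤ α'(i)) ∘ θᵢ` for all `i`. -/
def ChainHom.le {P Q : ChainObj C} (f g : ChainHom P Q) : Prop :=
  (∀ i, f.α i ≤ g.α i) ∧
    ∀ (i : Fin (P.n + 1)) (h : f.α i ≤ g.α i), g.θ i = f.θ i ≫ Q.X.map (homOfLE h)

theorem ChainHom.le_comp_right {P Q S : ChainObj C} {f f' : P ⟶ Q} (g : Q ⟶ S)
    (h : ChainHom.le f f') : ChainHom.le (f ≫ g) (f' ≫ g) := by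
  refine ⟨fun i => g.α.monotone (h.1 i), fun i hi => ?_⟩
  show f'.θ i ≫ g.θ (f'.α i) = (f.θ i ≫ g.θ (f.α i)) ≫ S.X.map (homOfLE hi)
  rw [h.2 i (h.1 i), Category.assoc, g.natural (h.1 i), ← Category.assoc]
  rfl

theorem ChainHom.le_comp_left {P Q S : ChainObj C} (f : P ⟶ Q) {g g' : Q ⟶ S}
    (h : ChainHom.le g g') : ChainHom.le (f ≫ g) (f ≫ g') := by
  refine ⟨fun i => h.1 (f.α i), fun i hi => ?_⟩
  show f.θ i ≫ g'.θ (f.α i) = (f.θ i ≫ g.θ (f.α i)) ≫ S.X.map (homOfLE hi)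
  rw [h.2 (f.α i) (h.1 (f.α i)), ← Category.assoc]
  rfl

/-- Objects of `∫N^{-,+}(C)`: chains all of whose morphisms lie in `C₋`. -/
structure NegObj (R : ReedyStruct C) where
  n : ℕ
  X : Fin (n + 1) ⥤ C
  negMap : ∀ {i j : Fin (n + 1)} (h : i ≤ j), R.neg (X.map (homOfLE h))

variable {R : ReedyStruct C}

/-- The underlying object of `∫N(C)`. -/
def NegObj.chain (P : NegObj R) : ChainObj C := ⟨P.n, P.X⟩

/-- Morphisms of `∫N^{-,+}(C)`: morphisms of `∫N(C)` all of whose components lie in `C₊`. -/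
def NegHomT (P Q : NegObj R) : Type v :=
  { f : P.chain ⟶ Q.chain // ∀ i, R.pos (f.θ i) }

def NegHomT.id (P : NegObj R) : NegHomT P P := ⟨𝟙 P.chain, fun _ => R.pos_id _⟩

def NegHomT.comp {P Q S : NegObj R} (f : NegHomT P Q) (g : NegHomT Q S) : NegHomT P S :=
  ⟨f.1 ≫ g.1, fun i => by
    show R.pos (f.1.θ i ≫ g.1.θ (f.1.α i))
    exact R.pos_comp _ _ (f.2 i) (g.2 _)⟩

theorem NegHomT.id_comp {P Q : NegObj R} (f : NegHomT P Q) : (NegHomT.id P).comp f = f := by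
  apply Subtype.ext
  show 𝟙 P.chain ≫ f.1 = f.1
  exact Category.id_comp f.1

theorem NegHomT.comp_id {P Q : NegObj R} (f : NegHomT P Q) : f.comp (NegHomT.id Q) = f := by
  apply Subtype.ext
  show f.1 ≫ 𝟙 Q.chain = f.1
  exact Category.comp_id f.1

theorem NegHomT.comp_assoc {P Q S T : NegObj R} (f : NegHomT P Q) (g : NegHomT Q S)
    (h : NegHomT S T) : (f.comp g).comp h = f.comp (g.comp h) := by
  apply Subtype.ext
  show (f.1 ≫ g.1) ≫ h.1 = f.1 ≫ (g.1 ≫ h.1)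
  exact Category.assoc f.1 g.1 h.1

/-- The category `∫N^{-,+}(C)`. -/
instance : Category (NegObj R) where
  Hom := NegHomT
  id := NegHomT.id
  comp := NegHomT.comp
  id_comp := NegHomT.id_comp
  comp_id := NegHomT.comp_id
  assoc := NegHomT.comp_assoc

/-- The order on the hom-sets of `∫N^{-,+}(C)`. -/
def NegHom.le {P Q : NegObj R} (f g : P ⟶ Q) : Prop := ChainHom.le f.1 g.1

/-- The equivalence relation `∼` on the hom-sets of `∫N^{-,+}(C)`: the
symmetric-transitive closure of `≤`. -/
def NegHom.equiv {P Q : NegObj R} (f g : P ⟶ Q) : Prop :=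
  Relation.EqvGen (fun a b : P ⟶ Q => NegHom.le a b) f g

theorem NegHom.le_comp_right {P Q S : NegObj R} {f f' : P ⟶ Q} (g : Q ⟶ S)
    (h : NegHom.le f f') : NegHom.le (f ≫ g) (f' ≫ g) :=
  ChainHom.le_comp_right g.1 h

theorem NegHom.le_comp_left {P Q S : NegObj R} (f : P ⟶ Q) {g g' : Q ⟶ S}
    (h : NegHom.le g g') : NegHom.le (f ≫ g) (f ≫ g') :=
  ChainHom.le_comp_left f.1 h

/-- Identity-reflectingness of a chain. -/
def NegObj.IdRefl (P : NegObj R) : Prop :=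
  ∀ {i j : Fin (P.n + 1)} (h : i ≤ j), IsIdMor (P.X.map (homOfLE h)) → i = j

/-- Objects of `∫N^{--,+}_+(C)`: identity-reflecting chains in `C₋`. -/
structure StrictObj (R : ReedyStruct C) where
  toNegObj : NegObj R
  idRefl : toNegObj.IdRefl

/-- Morphisms of `∫N^{--,+}_+(C)`: morphisms of `∫N^{-,+}(C)` with `α` injective. -/
def StrictHomT (P Q : StrictObj R) : Type v :=
  { f : P.toNegObj ⟶ Q.toNegObj // Function.Injective f.1.α }

def StrictHomT.id (P : StrictObj R) : StrictHomT P P :=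
  ⟨𝟙 P.toNegObj, fun _ _ h => h⟩

def StrictHomT.comp {P Q S : StrictObj R} (f : StrictHomT P Q) (g : StrictHomT Q S) :
    StrictHomT P S :=
  ⟨f.1 ≫ g.1, fun _ _ h => f.2 (g.2 h)⟩

/-- The category `∫N^{--,+}_+(C)`. -/
instance : Category (StrictObj R) where
  Hom := StrictHomT
  id := StrictHomT.id
  comp := StrictHomT.comp
  id_comp f := Subtype.ext (Category.id_comp f.1)
  comp_id f := Subtype.ext (Category.comp_id f.1)
  assoc f g h := Subtype.ext (Category.assoc f.1 g.1 h.1)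

/-- The order on the hom-sets of `∫N^{--,+}_+(C)`. -/
def StrictHom.le {P Q : StrictObj R} (f g : P ⟶ Q) : Prop := NegHom.le f.1 g.1

/-- The equivalence relation `∼` on the hom-sets of `∫N^{--,+}_+(C)`. -/
def StrictHom.equiv {P Q : StrictObj R} (f g : P ⟶ Q) : Prop :=
  Relation.EqvGen (fun a b : P ⟶ Q => StrictHom.le a b) f g

theorem StrictHom.le_comp_right {P Q S : StrictObj R} {f f' : P ⟶ Q} (g : Q ⟶ S)
    (h : StrictHom.le f f') : StrictHom.le (f ≫ g) (f' ≫ g) :=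
  NegHom.le_comp_right g.1 h

theorem StrictHom.le_comp_left {P Q S : StrictObj R} (f : P ⟶ Q) {g g' : Q ⟶ S}
    (h : StrictHom.le g g') : StrictHom.le (f ≫ g) (f ≫ g') :=
  NegHom.le_comp_left f.1 h

/-- Objects of `Down_*(C)`: the same as those of `∫N^{-,+}(C)`. -/
structure DownStar (R : ReedyStruct C) where
  obj : NegObj R

/-- The category `Down_*(C)`: hom-sets are the quotients of those of `∫N^{-,+}(C)`
by the symmetric-transitive closure of `≤`. -/
instance : Category (DownStar R) where
  Hom P Q := Quot (fun f g : P.obj ⟶ Q.obj => NegHom.le f g)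
  id P := Quot.mk _ (𝟙 P.obj)
  comp {P Q S} f g :=
    Quot.lift
      (fun f' => Quot.lift (fun g' => Quot.mk _ (f' ≫ g'))
        (fun _ _ hg => Quot.sound (NegHom.le_comp_left f' hg)) g)
      (fun f₁ f₂ hf => Quot.inductionOn g (fun g' =>
        Quot.sound (NegHom.le_comp_right g' hf))) f
  id_comp f := Quot.inductionOn f fun f' => congrArg (Quot.mk _) (Category.id_comp f')
  comp_id f := Quot.inductionOn f fun f' => congrArg (Quot.mk _) (Category.comp_id f')
  assoc f g h :=
    Quot.inductionOn f fun f' => Quot.inductionOn g fun g' => Quot.inductionOn h fun h' =>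
      congrArg (Quot.mk _) (Category.assoc f' g' h')

/-- Objects of `Down(C)`: the same as those of `∫N^{--,+}_+(C)`. -/
structure Down (R : ReedyStruct C) where
  obj : StrictObj R

/-- The category `Down(C)`: hom-sets are the quotients of those of `∫N^{--,+}_+(C)`
by the symmetric-transitive closure of `≤`. -/
instance : Category (Down R) where
  Hom P Q := Quot (fun f g : P.obj ⟶ Q.obj => StrictHom.le f g)
  id P := Quot.mk _ (𝟙 P.obj)
  comp {P Q S} f g :=
    Quot.lift
      (fun f' => Quot.lift (fun g' => Quot.mk _ (f' ≫ g'))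
        (fun _ _ hg => Quot.sound (StrictHom.le_comp_left f' hg)) g)
      (fun f₁ f₂ hf => Quot.inductionOn g (fun g' =>
        Quot.sound (StrictHom.le_comp_right g' hf))) f
  id_comp f := Quot.inductionOn f fun f' => congrArg (Quot.mk _) (Category.id_comp f')
  comp_id f := Quot.inductionOn f fun f' => congrArg (Quot.mk _) (Category.comp_id f')
  assoc f g h :=
    Quot.inductionOn f fun f' => Quot.inductionOn g fun g' => Quot.inductionOn h fun h' =>
      congrArg (Quot.mk _) (Category.assoc f' g' h')

/-- The quotient functor `∫N^{-,+}(C) → Down_*(C)`. -/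
def qStar (R : ReedyStruct C) : NegObj R ⥤ DownStar R where
  obj P := ⟨P⟩
  map f := Quot.mk _ f
  map_id _ := rfl
  map_comp _ _ := rfl

/-- The inclusion functor `Down(C) → Down_*(C)`. -/
def downInclusion (R : ReedyStruct C) : Down R ⥤ DownStar R where
  obj P := ⟨P.obj.toNegObj⟩
  map {P Q} f :=
    Quot.lift (fun f' : P.obj ⟶ Q.obj => Quot.mk _ f'.1) (fun _ _ h => Quot.sound h) f
  map_id _ := rfl
  map_comp {P Q S} f g := by
    induction f using Quot.ind
    induction g using Quot.ind
    rfl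

/-- The last-component functor `∫N(C) → C`. -/
def lastChain : ChainObj C ⥤ C where
  obj P := P.X.obj (Fin.last P.n)
  map {P Q} f := f.θ (Fin.last P.n) ≫ Q.X.map (homOfLE (Fin.le_last (f.α (Fin.last P.n))))
  map_id P := by
    show 𝟙 (P.X.obj (Fin.last P.n)) ≫ P.X.map (homOfLE (Fin.le_last (Fin.last P.n))) = 𝟙 _
    rw [Category.id_comp]
    exact P.X.map_id _
  map_comp {P Q S} f g := by
    show (f.θ (Fin.last P.n) ≫ g.θ (f.α (Fin.last P.n))) ≫
        S.X.map (homOfLE (Fin.le_last (g.α (f.α (Fin.last P.n))))) =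
      (f.θ (Fin.last P.n) ≫ Q.X.map (homOfLE (Fin.le_last (f.α (Fin.last P.n))))) ≫
        g.θ (Fin.last Q.n) ≫ S.X.map (homOfLE (Fin.le_last (g.α (Fin.last Q.n))))
    rw [Category.assoc, Category.assoc, ← Category.assoc (Q.X.map _),
      g.natural (Fin.le_last (f.α (Fin.last P.n))), Category.assoc, ← Functor.map_comp,
      homOfLE_comp]

theorem lastChain_eq_of_le {P Q : ChainObj C} {f g : P ⟶ Q} (h : ChainHom.le f g) :
    lastChain.map f = lastChain.map g := by
  show f.θ (Fin.last P.n) ≫ Q.X.map (homOfLE (Fin.le_last (f.α (Fin.last P.n)))) =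
    g.θ (Fin.last P.n) ≫ Q.X.map (homOfLE (Fin.le_last (g.α (Fin.last P.n))))
  rw [h.2 (Fin.last P.n) (h.1 (Fin.last P.n)), Category.assoc, ← Functor.map_comp,
    homOfLE_comp]

/-- The forgetful functor `∫N^{-,+}(C) → ∫N(C)`. -/
def negForget (R : ReedyStruct C) : NegObj R ⥤ ChainObj C where
  obj P := P.chain
  map f := f.1
  map_id _ := rfl
  map_comp _ _ := rfl

/-- The last-component functor `∫N^{-,+}(C) → C`. -/
def lastNeg (R : ReedyStruct C) : NegObj R ⥤ C := negForget R ⋙ lastChain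

/-- The forgetful functor `∫N^{--,+}_+(C) → ∫N^{-,+}(C)`. -/
def strictForget (R : ReedyStruct C) : StrictObj R ⥤ NegObj R where
  obj P := P.toNegObj
  map f := f.1
  map_id _ := rfl
  map_comp _ _ := rfl

/-- The last-component functor `∫N^{--,+}_+(C) → C`. -/
def lastStrict (R : ReedyStruct C) : StrictObj R ⥤ C := strictForget R ⋙ lastNeg R

/-- The last-component functor `Down_*(C) → C`. -/
def lastDownStar (R : ReedyStruct C) : DownStar R ⥤ C where
  obj P := (lastNeg R).obj P.obj
  map {P Q} f :=
    Quot.lift (fun f' : P.obj ⟶ Q.obj => (lastNeg R).map f')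
      (fun _ _ h => lastChain_eq_of_le h) f
  map_id P := (lastNeg R).map_id P.obj
  map_comp {P Q S} f g := by
    induction f using Quot.ind
    induction g using Quot.ind
    exact (lastNeg R).map_comp _ _

/-- The last-component functor `Down(C) → C`. -/
def lastDown (R : ReedyStruct C) : Down R ⥤ C where
  obj P := (lastStrict R).obj P.obj
  map {P Q} f :=
    Quot.lift (fun f' : P.obj ⟶ Q.obj => (lastStrict R).map f')
      (fun _ _ h => lastChain_eq_of_le h) f
  map_id P := (lastStrict R).map_id P.obj
  map_comp {P Q S} f g := by
    induction f using Quot.ind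
    induction g using Quot.ind
    exact (lastStrict R).map_comp _ _

/-- The wide subcategory `Γ₋` of `∫N^{-,+}(C)`: morphisms of the form
`(σ, id) : ([m], X ∘ σ) → ([n], X)` with `σ` surjective, i.e. morphisms whose simplicial
component is surjective and all of whose components are identities. -/
def GammaNeg (R : ReedyStruct C) {P Q : NegObj R} (f : P ⟶ Q) : Prop :=
  Function.Surjective f.1.α ∧ ∀ i, IsIdMor (f.1.θ i)

/-- The wide subcategory `Γ₊` of `∫N^{-,+}(C)`: morphisms `(δ, θ)` with `δ` injective. -/
def GammaPos (R : ReedyStruct C) {P Q : NegObj R} (f : P ⟶ Q) : Prop :=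
  Function.Injective f.1.α

/-- Whiskering (precomposition) with `lastF` is bijective on natural transformations
between functors out of `C`. -/
def WhiskerUnique {Γ : Type u₁} [Category.{v₁} Γ] (lastF : Γ ⥤ C) : Prop :=
  ∀ {D : Type u₂} [Category.{v₂} D] (F G : C ⥤ D)
    (ε : lastF ⋙ F ⟶ lastF ⋙ G), ∃! ε' : F ⟶ G, Functor.whiskerLeft lastF ε' = ε

/-- `lastF : Γ ⥤ C` is a weak 1-localization of `Γ` at the `last`-weak equivalences
(the morphisms sent by `lastF` to identities). -/
def IsWeakLocalizationAtLastWeq {Γ : Type u₁} [Category.{v₁} Γ] (lastF : Γ ⥤ C) : Prop :=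
  (∀ {P Q : Γ} (f : P ⟶ Q), IsIdMor (lastF.map f) → IsIso (lastF.map f)) ∧
  (∀ {E : Type u₂} [Category.{v₂} E] (G : Γ ⥤ E),
    (∀ {P Q : Γ} (f : P ⟶ Q), IsIdMor (lastF.map f) → IsIso (G.map f)) →
    ∃ H : C ⥤ E, Nonempty (lastF ⋙ H ≅ G)) ∧
  (∀ {E : Type u₂} [Category.{v₂} E] (H H' : C ⥤ E) (θ : lastF ⋙ H ≅ lastF ⋙ H'),
    ∃! θ' : H ≅ H', Functor.isoWhiskerLeft lastF θ' = θ)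

theorem isIdMor_eqToHom {x y : C} (e : x = y) : IsIdMor (eqToHom e) := ⟨e, rfl⟩

theorem IsIdMor.comp {x y z : C} {f : x ⟶ y} {g : y ⟶ z} (hf : IsIdMor f) (hg : IsIdMor g) :
    IsIdMor (f ≫ g) := by
  obtain ⟨rfl, rfl⟩ := hf
  obtain ⟨rfl, rfl⟩ := hg
  exact ⟨rfl, by simp⟩

theorem IsIdMor.isIso {x y : C} {f : x ⟶ y} (hf : IsIdMor f) : IsIso f := by
  obtain ⟨rfl, rfl⟩ := hf
  infer_instance

/-! ### Weak localizations -/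

section WeakLocalization

variable {Γ : Type u₁} [Category.{v₁} Γ] {Γ' : Type*} [Category Γ'] {E : Type u₂} [Category.{v₂} E]

def lastWeq (L : Γ ⥤ C) : MorphismProperty Γ := fun _ _ f => IsIdMor (L.map f)

theorem WhiskerUnique.existsUnique_isoWhiskerLeft {L : Γ ⥤ C} (hL : WhiskerUnique.{v₂, u₂} L)
    (H H' : C ⥤ E) (θ : L ⋙ H ≅ L ⋙ H') :
    ∃! θ' : H ≅ H', Functor.isoWhiskerLeft L θ' = θ := by
  let W := (Functor.whiskeringLeft Γ C E).obj L
  have : W.Full := ⟨fun ε => (hL _ _ ε).exists⟩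
  have : W.Faithful := ⟨fun hab => (hL _ _ _).unique hab rfl⟩
  refine ⟨W.preimageIso θ, Iso.ext (W.map_preimage θ.hom), fun θ' h => Iso.ext ?_⟩
  exact W.map_injective ((congrArg Iso.hom h).trans (W.map_preimage θ.hom).symm)

theorem isWeakLocalizationAtLastWeq_of (L : Γ ⥤ C) (hL : WhiskerUnique.{v₂, u₂} L)
    (lift : ∀ {E : Type u₂} [Category.{v₂} E] (G : Γ ⥤ E), (lastWeq L).IsInvertedBy G →
      ∃ H : C ⥤ E, Nonempty (L ⋙ H ≅ G)) :
    IsWeakLocalizationAtLastWeq.{v₂, u₂} L :=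
  ⟨fun _ hf => hf.isIso, fun G hG => lift G fun _ _ f hf => hG f hf,
    fun H H' θ => hL.existsUnique_isoWhiskerLeft H H' θ⟩

theorem whiskerUnique_of_section (L : Γ ⥤ C) (pt : C → Γ) (hpt : ∀ c, L.obj (pt c) = c)
    (η : ∀ P, ∃ m : pt (L.obj P) ⟶ P, IsIdMor (L.map m))
    (gen : ∀ {c c' : C} (f : c ⟶ c'),
      ((⊤ : MorphismProperty Γ).strictMap L).multiplicativeClosure f) :
    WhiskerUnique.{v₂, u₂} L := by
  intro E _ F G ε
  let δ : ∀ c, F.obj c ⟶ G.obj c := fun c =>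
    eqToHom (congrArg F.obj (hpt c).symm) ≫ ε.app (pt c) ≫ eqToHom (congrArg G.obj (hpt c))
  have fibre : ∀ P, δ (L.obj P) = ε.app P := by
    intro P
    obtain ⟨m, e, hm⟩ := η P
    have := ε.naturality m
    simp only [Functor.comp_map, hm, eqToHom_map] at this
    simp only [δ]
    rw [← this, eqToHom_trans_assoc, eqToHom_refl, Category.id_comp]
  have nat : ((⊤ : MorphismProperty Γ).strictMap L).multiplicativeClosure ≤
      MorphismProperty.naturalityProperty δ := by
    rw [MorphismProperty.multiplicativeClosure_le_iff]
    rintro _ _ _ ⟨-⟩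
    simpa only [MorphismProperty.naturalityProperty, fibre, Functor.comp_map] using ε.naturality _
  refine ⟨⟨δ, fun _ _ f => nat f (gen f)⟩, ?_, fun δ' h => ?_⟩
  · ext P
    exact fibre P
  · ext c
    simp only [δ, ← h, Functor.whiskerLeft_app]
    rw [NatTrans.congr δ' (hpt c)]
    simp only [eqToHom_map, eqToHom_trans_assoc, eqToHom_refl, Category.id_comp,
      Category.assoc, eqToHom_trans, Category.comp_id]

theorem WhiskerUnique.of_comp (Q : Γ' ⥤ Γ) (hQ : ∀ P, ∃ P', Q.obj P' = P) {L : Γ ⥤ C}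
    (hL : WhiskerUnique.{v₂, u₂} (Q ⋙ L)) : WhiskerUnique.{v₂, u₂} L := by
  intro E _ F G ε
  obtain ⟨δ, hδ, huniq⟩ := hL F G (Functor.whiskerLeft Q ε)
  refine ⟨δ, ?_, fun δ' h => huniq δ' (by rw [← h]; rfl)⟩
  ext P
  obtain ⟨P', rfl⟩ := hQ P
  exact congr_app hδ P'

theorem nonempty_iso_of_whiskerLeft (Q : Γ' ⥤ Γ) [Q.Full] (s : Γ → Γ')
    (hs : ∀ P, Q.obj (s P) = P) {A B : Γ ⥤ E} (e : Q ⋙ A ≅ Q ⋙ B) : Nonempty (A ≅ B) := by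
  refine ⟨NatIso.ofComponents (fun P => eqToIso (congrArg A.obj (hs P)).symm ≪≫ e.app (s P) ≪≫
    eqToIso (congrArg B.obj (hs P))) fun {P P'} f => ?_⟩
  obtain ⟨f', hf'⟩ := Q.map_surjective (eqToHom (hs P) ≫ f ≫ eqToHom (hs P').symm)
  have := e.hom.naturality f'
  simp only [Functor.comp_map, hf', Functor.map_comp, eqToHom_map, Category.assoc,
    eqToHom_comp_iff] at this
  simp only [Iso.trans_hom, eqToIso.hom, Iso.app_hom, Category.assoc, reassoc_of% this]
  simp

theorem isWeakLocalizationAtLastWeq_of_comp (Q : Γ' ⥤ Γ) [Q.Full] (s : Γ → Γ')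
    (hs : ∀ P, Q.obj (s P) = P) (L : Γ ⥤ C) (hL : WhiskerUnique.{v₂, u₂} (Q ⋙ L))
    (lift : ∀ {E : Type u₂} [Category.{v₂} E] (G : Γ ⥤ E), (lastWeq L).IsInvertedBy G →
      ∃ H : C ⥤ E, Nonempty ((Q ⋙ L) ⋙ H ≅ Q ⋙ G)) :
    IsWeakLocalizationAtLastWeq.{v₂, u₂} L := by
  refine isWeakLocalizationAtLastWeq_of L (hL.of_comp Q fun P => ⟨s P, hs P⟩) fun G hG => ?_
  obtain ⟨H, ⟨e⟩⟩ := lift G hG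
  exact ⟨H, nonempty_iso_of_whiskerLeft Q s hs e⟩

end WeakLocalization

section Zigzag

variable {E : Type*} [Category E]

theorem zigzag_comp {x z z' w₁ w₂ w₁₂ t : E} (u : x ⟶ w₁) (v : z ⟶ w₁) (u₂ : z ⟶ w₂)
    (v₂ : z' ⟶ w₂) (u₁₂ : x ⟶ w₁₂) (v₁₂ : z' ⟶ w₁₂) (j₁ : w₁ ⟶ t) (j₂ : w₂ ⟶ t)
    (j₁₂ : w₁₂ ⟶ t) [IsIso v] [IsIso v₂] [IsIso v₁₂] [IsIso j₂] [IsIso j₁₂]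
    (h₀ : u ≫ j₁ = u₁₂ ≫ j₁₂) (h₁ : v ≫ j₁ = u₂ ≫ j₂) (h₂ : v₂ ≫ j₂ = v₁₂ ≫ j₁₂) :
    u₁₂ ≫ inv v₁₂ = u ≫ inv v ≫ u₂ ≫ inv v₂ := by
  have e₁ : u₁₂ = u ≫ j₁ ≫ inv j₁₂ := by simp [reassoc_of% h₀]
  have e₂ : u₂ = v ≫ j₁ ≫ inv j₂ := by simp [reassoc_of% h₁]
  have e₃ : v₁₂ = v₂ ≫ j₂ ≫ inv j₁₂ := by simp [reassoc_of% h₂]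
  simp [e₁, e₂, e₃]

theorem zigzag_square {x y z w a b : E} (u : x ⟶ a) (v : z ⟶ a) (p : x ⟶ y) (p' : z ⟶ w)
    (u' : y ⟶ b) (v' : w ⟶ b) (φ : a ⟶ b) [IsIso v] [IsIso v'] (h₁ : p ≫ u' = u ≫ φ)
    (h₂ : p' ≫ v' = v ≫ φ) : u ≫ inv v ≫ p' = p ≫ u' ≫ inv v' := by
  have : inv v ≫ p' = φ ≫ inv v' := by
    rw [IsIso.eq_comp_inv, Category.assoc, h₂, IsIso.inv_hom_id_assoc]
  rw [this, reassoc_of% h₁]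

theorem zigzag_comp_eq {a b c d e : E} (p : a ⟶ b) (u : b ⟶ c) (v : d ⟶ c) [hv : IsIso v]
    (w : c ⟶ e) (ι : d ⟶ e) (ι' : a ⟶ e) (h₁ : v ≫ w = ι) (h₂ : p ≫ u ≫ w = ι') :
    (p ≫ u ≫ inv v) ≫ ι = ι' := by
  rw [← h₁, Category.assoc, Category.assoc, IsIso.inv_hom_id_assoc, h₂]

end Zigzag

/-! ### Functors out of a Reedy category -/

namespace ReedyStruct

variable (R)

theorem pos_of_isIdMor {x y : C} {f : x ⟶ y} (hf : IsIdMor f) : R.pos f := by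
  obtain ⟨rfl, rfl⟩ := hf
  exact R.pos_id x

theorem factor_eq {x y z : C} {f : x ⟶ y} (g : x ⟶ z) (h : z ⟶ y) (hg : R.neg g)
    (hh : R.pos h) (e : g ≫ h = f) : (R.factor_existsUnique f).choose = ⟨z, g, h⟩ :=
  ((R.factor_existsUnique f).choose_spec.2 ⟨z, g, h⟩ ⟨hg, hh, e⟩).symm

variable {R}

theorem isIdMor_of_comp_eq_pos {x y w : C} {g : x ⟶ w} {h : w ⟶ y} {f : x ⟶ y}
    (hg : R.neg g) (hh : R.pos h) (hf : R.pos f) (e : g ≫ h = f) : IsIdMor g := by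
  have := (R.factor_eq (𝟙 x) f (R.neg_id x) hf (Category.id_comp f)).symm.trans
    (R.factor_eq g h hg hh e)
  cases this
  exact ⟨rfl, rfl⟩

theorem not_isIdMor_comp {x z z' : C} {g : x ⟶ z} {g' : z ⟶ z'} (hg : R.neg g)
    (hg' : R.neg g') (h : ¬IsIdMor g) (h' : ¬IsIdMor g') : ¬IsIdMor (g ≫ g') := by
  rintro ⟨rfl, -⟩
  exact R.wf.asymmetric _ _ (Or.inr ⟨g, hg, h⟩) (Or.inr ⟨g', hg', h'⟩)

variable (R) in
structure GlueData (E : Type*) [Category E] where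
  obj : C → E
  pos : ∀ {x y : C} (h : x ⟶ y), R.pos h → (obj x ⟶ obj y)
  neg : ∀ {x y : C} (g : x ⟶ y), R.neg g → (obj x ⟶ obj y)
  pos_id : ∀ x, pos (𝟙 x) (R.pos_id x) = 𝟙 _
  neg_id : ∀ x, neg (𝟙 x) (R.neg_id x) = 𝟙 _
  pos_comp : ∀ {x y z : C} (h : x ⟶ y) (h' : y ⟶ z) (hh : R.pos h) (hh' : R.pos h'),
    pos (h ≫ h') (R.pos_comp h h' hh hh') = pos h hh ≫ pos h' hh'
  neg_comp : ∀ {x y z : C} (g : x ⟶ y) (g' : y ⟶ z) (hg : R.neg g) (hg' : R.neg g'),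
    neg (g ≫ g') (R.neg_comp g g' hg hg') = neg g hg ≫ neg g' hg'
  square : ∀ {x y z w : C} (h : x ⟶ y) (g : y ⟶ z) (g' : x ⟶ w) (h' : w ⟶ z) (hh : R.pos h)
    (hg : R.neg g) (hg' : R.neg g') (hh' : R.pos h'), h ≫ g = g' ≫ h' →
    neg g' hg' ≫ pos h' hh' = pos h hh ≫ neg g hg

namespace GlueData

variable {E : Type*} [Category E] (D : R.GlueData E)

noncomputable def map {x y : C} (f : x ⟶ y) : D.obj x ⟶ D.obj y :=
  have spec := (R.factor_existsUnique f).choose_spec.1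
  D.neg _ spec.1 ≫ D.pos _ spec.2.1

theorem map_eq {x y z : C} {f : x ⟶ y} (g : x ⟶ z) (h : z ⟶ y) (hg : R.neg g) (hh : R.pos h)
    (e : g ≫ h = f) : D.map f = D.neg g hg ≫ D.pos h hh := by
  have key : ∀ t : Σ z : C, (x ⟶ z) × (z ⟶ y), t = ⟨z, g, h⟩ →
      ∀ ht : R.neg t.2.1 ∧ R.pos t.2.2, D.neg _ ht.1 ≫ D.pos _ ht.2 = D.neg g hg ≫ D.pos h hh := by
    rintro _ rfl _
    rfl
  exact key _ (R.factor_eq g h hg hh e) ⟨(R.factor_existsUnique f).choose_spec.1.1,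
    (R.factor_existsUnique f).choose_spec.1.2.1⟩

theorem map_pos {x y : C} (h : x ⟶ y) (hh : R.pos h) : D.map h = D.pos h hh := by
  rw [D.map_eq (𝟙 x) h (R.neg_id x) hh (Category.id_comp h), D.neg_id, Category.id_comp]

theorem map_neg {x y : C} (g : x ⟶ y) (hg : R.neg g) : D.map g = D.neg g hg := by
  rw [D.map_eq g (𝟙 y) hg (R.pos_id y) (Category.comp_id g), D.pos_id, Category.comp_id]

noncomputable def functor : C ⥤ E where
  obj := D.obj
  map := D.map
  map_id x := by rw [D.map_pos (𝟙 x) (R.pos_id x), D.pos_id]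
  map_comp {x y w} f₁ f₂ := by
    obtain ⟨⟨z₁, g₁, h₁⟩, ⟨hg₁, hh₁, e₁⟩, -⟩ := R.factor_existsUnique f₁
    obtain ⟨⟨z₂, g₂, h₂⟩, ⟨hg₂, hh₂, e₂⟩, -⟩ := R.factor_existsUnique f₂
    obtain ⟨⟨z, g, h⟩, ⟨hg, hh, e⟩, -⟩ := R.factor_existsUnique (h₁ ≫ g₂)
    dsimp only at hg₁ hh₁ e₁ hg₂ hh₂ e₂ hg hh e
    have e₁₂ : (g₁ ≫ g) ≫ h ≫ h₂ = f₁ ≫ f₂ := by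
      simp only [← e₁, ← e₂, Category.assoc, reassoc_of% e]
    rw [D.map_eq _ _ (R.neg_comp _ _ hg₁ hg) (R.pos_comp _ _ hh hh₂) e₁₂, D.map_eq _ _ hg₁ hh₁ e₁,
      D.map_eq _ _ hg₂ hh₂ e₂, D.neg_comp _ _ hg₁ hg, D.pos_comp _ _ hh hh₂, Category.assoc,
      reassoc_of% D.square h₁ g₂ g h hh₁ hg₂ hg hh e.symm, Category.assoc]

theorem functor_map_pos {x y : C} (h : x ⟶ y) (hh : R.pos h) : D.functor.map h = D.pos h hh :=
  D.map_pos h hh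

theorem functor_map_pos_comp_neg {x y z : C} (h : x ⟶ y) (g : y ⟶ z) (hh : R.pos h)
    (hg : R.neg g) : D.functor.map (h ≫ g) = D.pos h hh ≫ D.neg g hg :=
  (D.functor.map_comp h g).trans (congrArg₂ (· ≫ ·) (D.map_pos h hh) (D.map_neg g hg))

end GlueData

end ReedyStruct

/-! ### The category `∫N(C)` -/

section Chains

theorem map_eq_eqToHom {n : ℕ} (X : Fin (n + 1) ⥤ C) {i j : Fin (n + 1)} (f : i ⟶ j)
    (e : i = j) : X.map f = eqToHom (congrArg X.obj e) := by
  subst e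
  rw [Subsingleton.elim f (𝟙 i), X.map_id, eqToHom_refl]

theorem map_eq_id {n : ℕ} (X : Fin (n + 1) ⥤ C) {i : Fin (n + 1)} (f : i ⟶ i) :
    X.map f = 𝟙 _ :=
  map_eq_eqToHom X f rfl

theorem ChainHom.ext_eqToHom {P Q : ChainObj C} {f g : ChainHom P Q} (hα : ∀ i, f.α i = g.α i)
    (hθ : ∀ i, f.θ i ≫ eqToHom (congrArg Q.X.obj (hα i)) = g.θ i) : f = g := by
  obtain ⟨fα, fθ, _⟩ := f
  obtain ⟨gα, gθ, _⟩ := g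
  obtain rfl : fα = gα := OrderHom.ext _ _ (funext hα)
  exact ChainHom.ext' rfl (heq_of_eq (funext fun i => by simpa using hθ i))

def chainPt : C ⥤ ChainObj C where
  obj c := ⟨0, (Functor.const _).obj c⟩
  map f := ⟨OrderHom.id, fun _ => f, fun _ => by simp⟩
  map_id _ := ChainHom.ext_eqToHom (fun _ => rfl) fun _ => Category.comp_id _
  map_comp _ _ := ChainHom.ext_eqToHom (fun _ => rfl) fun _ => Category.comp_id _

def ChainObj.lastIncl (P : ChainObj C) : chainPt.obj (P.X.obj (Fin.last P.n)) ⟶ P :=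
  ⟨OrderHom.const _ (Fin.last P.n), fun _ => 𝟙 _, fun _ => by
    show 𝟙 _ ≫ 𝟙 _ = 𝟙 _ ≫ P.X.map (homOfLE _)
    rw [map_eq_id]⟩

def ChainObj.toLast (Q : ChainObj C) : Q ⟶ chainPt.obj (Q.X.obj (Fin.last Q.n)) :=
  ⟨OrderHom.const _ 0, fun i => Q.X.map (homOfLE (Fin.le_last i)), fun h => by
    show Q.X.map (homOfLE h) ≫ Q.X.map (homOfLE _) = Q.X.map (homOfLE _) ≫ 𝟙 _
    rw [← Q.X.map_comp, homOfLE_comp, Category.comp_id]⟩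

theorem lastChain_map_chainPt {x y : C} (f : x ⟶ y) : lastChain.map (chainPt.map f) = f :=
  Category.comp_id f

theorem isIdMor_lastChain_map_lastIncl (P : ChainObj C) : IsIdMor (lastChain.map P.lastIncl) :=
  ⟨rfl, by
    show 𝟙 _ ≫ P.X.map (homOfLE _) = 𝟙 _
    rw [Category.id_comp, map_eq_id]⟩

theorem isIdMor_lastChain_map_toLast (Q : ChainObj C) : IsIdMor (lastChain.map Q.toLast) :=
  ⟨rfl, by
    show Q.X.map (homOfLE _) ≫ 𝟙 _ = 𝟙 _
    rw [Category.comp_id, map_eq_id]⟩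

theorem ChainHom.le.comp_toLast {P Q : ChainObj C} {a b : P ⟶ Q} (h : ChainHom.le a b) :
    a ≫ Q.toLast = b ≫ Q.toLast := by
  refine ChainHom.ext_eqToHom (fun _ => rfl) fun i => ?_
  show (a.θ i ≫ Q.X.map (homOfLE (Fin.le_last (a.α i)))) ≫ eqToHom _ =
    b.θ i ≫ Q.X.map (homOfLE (Fin.le_last (b.α i)))
  rw [h.2 i (h.1 i), Category.assoc, Category.assoc, ← Q.X.map_comp, homOfLE_comp]
  simp

theorem lastIncl_comp_le {P Q : ChainObj C} (f : P ⟶ Q) :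
    ChainHom.le (P.lastIncl ≫ f) (chainPt.map (lastChain.map f) ≫ Q.lastIncl) := by
  refine ⟨fun _ => Fin.le_last _, fun i hi => ?_⟩
  show lastChain.map f ≫ 𝟙 _ = (𝟙 _ ≫ f.θ (Fin.last P.n)) ≫ Q.X.map (homOfLE hi)
  simp only [Category.comp_id, Category.id_comp]
  rfl

theorem whiskerUnique_lastChain : WhiskerUnique.{v₂, u₂} (lastChain (C := C)) :=
  whiskerUnique_of_section lastChain chainPt.obj (fun _ => rfl)
    (fun P => ⟨P.lastIncl, isIdMor_lastChain_map_lastIncl P⟩) fun f => by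
      have := MorphismProperty.map_mem_strictMap ⊤ lastChain (chainPt.map f) trivial
      rw [lastChain_map_chainPt] at this
      exact .of _ this

theorem exists_lastChain_comp_iso {E : Type u₂} [Category.{v₂} E] (G : ChainObj C ⥤ E)
    (hG : (lastWeq lastChain).IsInvertedBy G) : ∃ H : C ⥤ E, Nonempty (lastChain ⋙ H ≅ G) := by
  have map_eq_of_le : ∀ {P Q : ChainObj C} {a b : P ⟶ Q}, ChainHom.le a b → G.map a = G.map b := by
    intro P Q a b h
    have := hG _ (isIdMor_lastChain_map_toLast Q)
    exact (cancel_mono (G.map Q.toLast)).1 (by simpa using congrArg G.map h.comp_toLast)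
  refine ⟨chainPt ⋙ G, ⟨NatIso.ofComponents (fun P => @asIso _ _ _ _ (G.map P.lastIncl)
    (hG _ (isIdMor_lastChain_map_lastIncl P))) fun f => ?_⟩⟩
  exact (G.map_comp _ _).symm.trans ((map_eq_of_le (lastIncl_comp_le f)).symm.trans
    (G.map_comp _ _))

theorem isWeakLocalizationAtLastWeq_lastChain :
    IsWeakLocalizationAtLastWeq.{v₂, u₂} (lastChain (C := C)) :=
  isWeakLocalizationAtLastWeq_of _ whiskerUnique_lastChain exists_lastChain_comp_iso

end Chains

/-! ### Chains in `∫N^{-,+}(C)` -/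

section NegChains

theorem NegHom.ext_eqToHom {P Q : NegObj R} {f g : P ⟶ Q} (hα : ∀ i, f.1.α i = g.1.α i)
    (hθ : ∀ i, f.1.θ i ≫ eqToHom (congrArg Q.X.obj (hα i)) = g.1.θ i) : f = g :=
  Subtype.ext (ChainHom.ext_eqToHom hα hθ)

def NegHom.IsReindexing {P Q : NegObj R} (f : P ⟶ Q) : Prop := ∀ i, IsIdMor (f.1.θ i)

theorem NegHom.IsReindexing.comp {P Q S : NegObj R} {f : P ⟶ Q} {g : Q ⟶ S}
    (hf : NegHom.IsReindexing f) (hg : NegHom.IsReindexing g) : NegHom.IsReindexing (f ≫ g) :=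
  fun i => (hf i).comp (hg _)

theorem NegHom.isReindexing_id (P : NegObj R) : NegHom.IsReindexing (𝟙 P) :=
  fun _ => ⟨rfl, rfl⟩

theorem NegHom.ext_of_isReindexing {P Q : NegObj R} {f g : P ⟶ Q} (hf : NegHom.IsReindexing f)
    (hg : NegHom.IsReindexing g) (hα : ∀ i, f.1.α i = g.1.α i) : f = g := by
  refine NegHom.ext_eqToHom hα fun i => ?_
  obtain ⟨e, he⟩ := hf i
  obtain ⟨e', he'⟩ := hg i
  rw [he, he']
  exact eqToHom_trans _ _

def negMk {P Q : NegObj R} (α : Fin (P.n + 1) →o Fin (Q.n + 1))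
    (hobj : ∀ i, P.X.obj i = Q.X.obj (α i))
    (hnat : ∀ {i j : Fin (P.n + 1)} (h : i ≤ j),
      P.X.map (homOfLE h) ≫ eqToHom (hobj j) =
        eqToHom (hobj i) ≫ Q.X.map (homOfLE (α.monotone h))) : P ⟶ Q :=
  ⟨⟨α, fun i => eqToHom (hobj i), hnat⟩, fun i => R.pos_of_isIdMor (isIdMor_eqToHom (hobj i))⟩

theorem isReindexing_negMk {P Q : NegObj R} (α) (hobj) (hnat) :
    NegHom.IsReindexing (negMk (P := P) (Q := Q) α hobj hnat) :=
  fun i => isIdMor_eqToHom (hobj i)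

theorem isIdMor_lastNeg_map_negMk {P Q : NegObj R} (α) (hobj) (hnat)
    (hlast : α (Fin.last P.n) = Fin.last Q.n) :
    IsIdMor ((lastNeg R).map (negMk α hobj hnat)) := by
  refine ⟨(hobj (Fin.last P.n)).trans (congrArg Q.X.obj hlast), ?_⟩
  show eqToHom (hobj (Fin.last P.n)) ≫ Q.X.map (homOfLE (Fin.le_last _)) = _
  exact (congrArg (eqToHom _ ≫ ·) (map_eq_eqToHom Q.X _ hlast)).trans (eqToHom_trans _ _)

variable (R) in
def negPt (c : C) : NegObj R :=
  ⟨0, (Functor.const _).obj c, fun _ => R.neg_id c⟩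

def NegObj.incl (P : NegObj R) (i₀ : Fin (P.n + 1)) : negPt R (P.X.obj i₀) ⟶ P :=
  negMk (OrderHom.const _ i₀) (fun _ => rfl) fun _ => by
    show 𝟙 _ ≫ eqToHom _ = eqToHom _ ≫ P.X.map (homOfLE _)
    rw [map_eq_id, Category.id_comp, Category.comp_id]

def NegObj.lastIncl (P : NegObj R) : negPt R (P.X.obj (Fin.last P.n)) ⟶ P :=
  P.incl (Fin.last P.n)

theorem isIdMor_lastNeg_map_lastIncl (P : NegObj R) : IsIdMor ((lastNeg R).map P.lastIncl) :=
  isIdMor_lastNeg_map_negMk _ _ _ rfl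

def negPtMap {x y : C} (h : x ⟶ y) (hh : R.pos h) : negPt R x ⟶ negPt R y :=
  ⟨⟨OrderHom.id, fun _ => h, fun _ => (Category.id_comp h).trans (Category.comp_id h).symm⟩,
    fun _ => hh⟩

theorem negPtMap_id (x : C) : negPtMap (𝟙 x) (R.pos_id x) = 𝟙 (negPt R x) :=
  NegHom.ext_eqToHom (fun _ => rfl) fun _ => Category.comp_id _

theorem negPtMap_comp {x y z : C} (h : x ⟶ y) (h' : y ⟶ z) (hh : R.pos h) (hh' : R.pos h') :
    negPtMap (h ≫ h') (R.pos_comp _ _ hh hh') = negPtMap h hh ≫ negPtMap h' hh' :=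
  NegHom.ext_eqToHom (fun _ => rfl) fun _ => Category.comp_id _

theorem lastNeg_map_negPtMap {x y : C} (h : x ⟶ y) (hh : R.pos h) :
    (lastNeg R).map (negPtMap h hh) = h :=
  Category.comp_id h

def negArrow {x z : C} (g : x ⟶ z) (hg : R.neg g) : NegObj R :=
  ⟨1, ComposableArrows.mk₁ g, by
    intro i j h
    fin_cases i <;> fin_cases j
    · exact R.neg_id _
    · exact hg
    · exact absurd h (by decide)
    · exact R.neg_id _⟩

def negSrc {x z : C} (g : x ⟶ z) (hg : R.neg g) : negPt R x ⟶ negArrow g hg :=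
  (negArrow g hg).incl 0

def negTgt {x z : C} (g : x ⟶ z) (hg : R.neg g) : negPt R z ⟶ negArrow g hg :=
  (negArrow g hg).incl 1

theorem lastNeg_map_negSrc {x z : C} (g : x ⟶ z) (hg : R.neg g) :
    (lastNeg R).map (negSrc g hg) = g :=
  Category.id_comp g

theorem isIdMor_lastNeg_map_negTgt {x z : C} (g : x ⟶ z) (hg : R.neg g) :
    IsIdMor ((lastNeg R).map (negTgt g hg)) :=
  isIdMor_lastNeg_map_negMk _ _ _ rfl

def negArrowHom {x z : C} {g : x ⟶ z} (hg : R.neg g) {Q : NegObj R} (i j : Fin (Q.n + 1))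
    (hij : i ≤ j) (e : Arrow.mk g = Arrow.mk (Q.X.map (homOfLE hij))) : negArrow g hg ⟶ Q :=
  negMk (SimplexCategory.mkOfLe i j hij).toOrderHom
    (fun k => by
      fin_cases k
      exacts [congrArg Arrow.left e, congrArg Arrow.right e])
    (fun {k l} h => by
      obtain ⟨hx, hz, he⟩ := (Arrow.mk_eq_mk_iff _ _).1 e
      fin_cases k <;> fin_cases l
      · rw [map_eq_id, map_eq_id, Category.id_comp, Category.comp_id]
      · show g ≫ eqToHom hz = eqToHom hx ≫ Q.X.map (homOfLE hij)
        simp [he]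
      · simp [negArrow] at h
      · rw [map_eq_id, map_eq_id, Category.id_comp, Category.comp_id])

def negCollapse (x : C) : negArrow (𝟙 x) (R.neg_id x) ⟶ negPt R x :=
  negArrowHom (R.neg_id x) 0 0 le_rfl rfl

theorem negSrc_comp_negCollapse (x : C) :
    negSrc (𝟙 x) (R.neg_id x) ≫ negCollapse x = 𝟙 _ :=
  NegHom.ext_of_isReindexing ((isReindexing_negMk _ _ _).comp (isReindexing_negMk _ _ _))
    (NegHom.isReindexing_id _) fun i => by fin_cases i; rfl

theorem negTgt_comp_negCollapse (x : C) :
    negTgt (𝟙 x) (R.neg_id x) ≫ negCollapse x = 𝟙 _ :=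
  NegHom.ext_of_isReindexing ((isReindexing_negMk _ _ _).comp (isReindexing_negMk _ _ _))
    (NegHom.isReindexing_id _) fun i => by fin_cases i; rfl

def negTwoArrows {x z z' : C} (g : x ⟶ z) (g' : z ⟶ z') (hg : R.neg g) (hg' : R.neg g') :
    NegObj R :=
  ⟨2, ComposableArrows.mk₂ g g', by
    intro i j h
    fin_cases i <;> fin_cases j
    all_goals first
      | exact R.neg_id _
      | exact hg
      | exact hg'
      | exact R.neg_comp _ _ hg hg'
      | simp at h⟩

section Faces

variable {x z z' : C} (g : x ⟶ z) (g' : z ⟶ z') (hg : R.neg g) (hg' : R.neg g')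

def negFace₀ : negArrow g' hg' ⟶ negTwoArrows g g' hg hg' :=
  negArrowHom hg' 1 2 (show (1 : Fin 3) ≤ 2 by decide) rfl

def negFace₁ : negArrow (g ≫ g') (R.neg_comp _ _ hg hg') ⟶ negTwoArrows g g' hg hg' :=
  negArrowHom _ 0 2 (show (0 : Fin 3) ≤ 2 by decide) rfl

def negFace₂ : negArrow g hg ⟶ negTwoArrows g g' hg hg' :=
  negArrowHom hg 0 1 (show (0 : Fin 3) ≤ 1 by decide) rfl

theorem negSrc_comp_negFace₂ :
    negSrc g hg ≫ negFace₂ g g' hg hg' =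
      negSrc (g ≫ g') (R.neg_comp _ _ hg hg') ≫ negFace₁ g g' hg hg' :=
  NegHom.ext_of_isReindexing ((isReindexing_negMk _ _ _).comp (isReindexing_negMk _ _ _))
    ((isReindexing_negMk _ _ _).comp (isReindexing_negMk _ _ _)) fun _ => rfl

theorem negTgt_comp_negFace₂ :
    negTgt g hg ≫ negFace₂ g g' hg hg' = negSrc g' hg' ≫ negFace₀ g g' hg hg' :=
  NegHom.ext_of_isReindexing ((isReindexing_negMk _ _ _).comp (isReindexing_negMk _ _ _))
    ((isReindexing_negMk _ _ _).comp (isReindexing_negMk _ _ _)) fun _ => rfl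

theorem negTgt_comp_negFace₀ :
    negTgt g' hg' ≫ negFace₀ g g' hg hg' =
      negTgt (g ≫ g') (R.neg_comp _ _ hg hg') ≫ negFace₁ g g' hg hg' :=
  NegHom.ext_of_isReindexing ((isReindexing_negMk _ _ _).comp (isReindexing_negMk _ _ _))
    ((isReindexing_negMk _ _ _).comp (isReindexing_negMk _ _ _)) fun _ => rfl

end Faces

def NegObj.lastEdge (Q : NegObj R) (j : Fin (Q.n + 1)) :
    negArrow (Q.X.map (homOfLE (Fin.le_last j))) (Q.negMap _) ⟶ Q :=
  negArrowHom _ j (Fin.last Q.n) (Fin.le_last j) rfl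

theorem negTgt_comp_lastEdge (Q : NegObj R) (j : Fin (Q.n + 1)) :
    negTgt _ (Q.negMap (Fin.le_last j)) ≫ Q.lastEdge j = Q.lastIncl :=
  NegHom.ext_of_isReindexing ((isReindexing_negMk _ _ _).comp (isReindexing_negMk _ _ _))
    (isReindexing_negMk _ _ _) fun _ => rfl

theorem negPtMap_comp_negSrc_comp_lastEdge {P Q : NegObj R} (ψ : P ⟶ Q) :
    negPtMap (ψ.1.θ (Fin.last P.n)) (ψ.2 _) ≫ negSrc _ (Q.negMap _) ≫
      Q.lastEdge (ψ.1.α (Fin.last P.n)) = P.lastIncl ≫ ψ := by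
  refine NegHom.ext_eqToHom (fun _ => rfl) fun i => ?_
  show (ψ.1.θ (Fin.last P.n) ≫ eqToHom rfl ≫ eqToHom rfl) ≫ eqToHom rfl =
    eqToHom rfl ≫ ψ.1.θ ((OrderHom.const _ (Fin.last P.n)) i)
  simp only [eqToHom_refl, Category.comp_id, Category.id_comp]
  rfl

theorem negPtMap_lastNeg_map_comp_lastIncl {P Q : NegObj R} (ψ : P ⟶ Q)
    (hj : ψ.1.α (Fin.last P.n) = Fin.last Q.n) (hpos : R.pos ((lastNeg R).map ψ)) :
    negPtMap _ hpos ≫ Q.lastIncl = P.lastIncl ≫ ψ := by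
  obtain ⟨f, hf⟩ := ψ
  change f.α (Fin.last P.chain.n) = Fin.last Q.chain.n at hj
  refine NegHom.ext_eqToHom (fun _ => hj.symm) fun _ => ?_
  show ((f.θ (Fin.last P.chain.n) ≫ Q.chain.X.map (homOfLE (Fin.le_last _))) ≫ eqToHom rfl) ≫
    eqToHom _ = eqToHom rfl ≫ f.θ (Fin.last P.chain.n)
  rw [map_eq_eqToHom Q.chain.X _ hj]
  simp only [Category.assoc, eqToHom_refl, Category.id_comp]
  exact (congrArg (f.θ _ ≫ ·) (eqToHom_trans _ _)).trans (Category.comp_id _)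

section Square

variable {x y z w : C} {h : x ⟶ y} {g : y ⟶ z} {g' : x ⟶ w} {h' : w ⟶ z} (hh : R.pos h)
  (hg : R.neg g) (hg' : R.neg g') (hh' : R.pos h') (sq : h ≫ g = g' ≫ h')

def negSquare : negArrow g' hg' ⟶ negArrow g hg :=
  ⟨⟨OrderHom.id, fun i => match i with
      | ⟨0, _⟩ => h
      | ⟨1, _⟩ => h', fun {i j} hij => by
      fin_cases i <;> fin_cases j
      · exact (Category.id_comp h).trans (Category.comp_id h).symm
      · exact sq.symm
      · simp [negArrow, NegObj.chain] at hij
      · exact (Category.id_comp h').trans (Category.comp_id h').symm⟩,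
    fun i => by
      fin_cases i
      exacts [hh, hh']⟩

theorem negPtMap_comp_negSrc :
    negPtMap h hh ≫ negSrc g hg = negSrc g' hg' ≫ negSquare hh hg hg' hh' sq := by
  refine NegHom.ext_eqToHom (fun _ => rfl) fun _ => ?_
  show (h ≫ eqToHom rfl) ≫ eqToHom rfl = eqToHom rfl ≫ h
  simp

theorem negPtMap_comp_negTgt :
    negPtMap h' hh' ≫ negTgt g hg = negTgt g' hg' ≫ negSquare hh hg hg' hh' sq := by
  refine NegHom.ext_eqToHom (fun _ => rfl) fun _ => ?_
  show (h' ≫ eqToHom rfl) ≫ eqToHom rfl = eqToHom rfl ≫ h'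
  simp

end Square

theorem negPtMap_comp_negSrc_le {x y z : C} {h : x ⟶ y} {g : y ⟶ z} {h' : x ⟶ z} (hh : R.pos h)
    (hg : R.neg g) (hh' : R.pos h') (sq : h ≫ g = h') :
    NegHom.le (negPtMap h hh ≫ negSrc g hg) (negPtMap h' hh' ≫ negTgt g hg) := by
  refine ⟨fun _ => Fin.zero_le _, fun _ hi => ?_⟩
  show h' ≫ eqToHom rfl = (h ≫ eqToHom rfl) ≫ (negArrow g hg).X.map (homOfLE hi)
  rw [show (negArrow g hg).X.map (homOfLE hi) = g from rfl]
  simp only [eqToHom_refl, Category.comp_id]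
  exact sq.symm

end NegChains

/-! ### The localizations `∫N^{-,+}(C) ⥤ C` and `Down_*(C) ⥤ C` -/

section NegLocalization

variable {E : Type u₂} [Category.{v₂} E] (G : NegObj R ⥤ E)
  (hG : (lastWeq (lastNeg R)).IsInvertedBy G)

noncomputable def negZig {x z : C} (g : x ⟶ z) (hg : R.neg g) :
    G.obj (negPt R x) ⟶ G.obj (negPt R z) :=
  letI := hG _ (isIdMor_lastNeg_map_negTgt g hg)
  G.map (negSrc g hg) ≫ inv (G.map (negTgt g hg))

theorem negZig_id (x : C) : negZig G hG (𝟙 x) (R.neg_id x) = 𝟙 _ := by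
  have := hG (negCollapse x) (isIdMor_lastNeg_map_negMk _ _ _ rfl)
  have hsrc : G.map (negSrc (𝟙 x) (R.neg_id x)) = G.map (negTgt (𝟙 x) (R.neg_id x)) := by
    rw [← cancel_mono (G.map (negCollapse x)), ← G.map_comp, ← G.map_comp,
      negSrc_comp_negCollapse, negTgt_comp_negCollapse]
  simp [negZig, hsrc]

theorem negZig_comp {x z z' : C} (g : x ⟶ z) (g' : z ⟶ z') (hg : R.neg g) (hg' : R.neg g') :
    negZig G hG (g ≫ g') (R.neg_comp _ _ hg hg') = negZig G hG g hg ≫ negZig G hG g' hg' := by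
  have := hG _ (isIdMor_lastNeg_map_negTgt g hg)
  have := hG _ (isIdMor_lastNeg_map_negTgt g' hg')
  have := hG _ (isIdMor_lastNeg_map_negTgt (g ≫ g') (R.neg_comp _ _ hg hg'))
  have := hG (negFace₀ g g' hg hg') (isIdMor_lastNeg_map_negMk _ _ _ rfl)
  have := hG (negFace₁ g g' hg hg') (isIdMor_lastNeg_map_negMk _ _ _ rfl)
  have h₀ := congrArg G.map (negSrc_comp_negFace₂ g g' hg hg')
  have h₁ := congrArg G.map (negTgt_comp_negFace₂ g g' hg hg')
  have h₂ := congrArg G.map (negTgt_comp_negFace₀ g g' hg hg')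
  simp only [G.map_comp] at h₀ h₁ h₂
  simpa only [negZig, Category.assoc] using zigzag_comp _ _ _ _ _ _ _ _ _ h₀ h₁ h₂

theorem negZig_square {x y z w : C} {h : x ⟶ y} {g : y ⟶ z} {g' : x ⟶ w} {h' : w ⟶ z}
    (hh : R.pos h) (hg : R.neg g) (hg' : R.neg g') (hh' : R.pos h') (sq : h ≫ g = g' ≫ h') :
    negZig G hG g' hg' ≫ G.map (negPtMap h' hh') = G.map (negPtMap h hh) ≫ negZig G hG g hg := by
  have := hG _ (isIdMor_lastNeg_map_negTgt g hg)
  have := hG _ (isIdMor_lastNeg_map_negTgt g' hg')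
  have h₁ := congrArg G.map (negPtMap_comp_negSrc hh hg hg' hh' sq)
  have h₂ := congrArg G.map (negPtMap_comp_negTgt hh hg hg' hh' sq)
  simp only [G.map_comp] at h₁ h₂
  simpa only [negZig, Category.assoc] using zigzag_square _ _ _ _ _ _ _ h₁ h₂

noncomputable def negGlueData : R.GlueData E where
  obj c := G.obj (negPt R c)
  pos h hh := G.map (negPtMap h hh)
  neg := negZig G hG
  pos_id x := by rw [negPtMap_id, G.map_id]
  neg_id := negZig_id G hG
  pos_comp h h' hh hh' := by rw [negPtMap_comp, G.map_comp]
  neg_comp := negZig_comp G hG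
  square _ _ _ _ hh hg hg' hh' sq := negZig_square G hG hh hg hg' hh' sq

theorem negGlueData_functor_map_lastNeg_map {P Q : NegObj R} (ψ : P ⟶ Q) :
    (negGlueData G hG).functor.map ((lastNeg R).map ψ) ≫ G.map Q.lastIncl =
      G.map P.lastIncl ≫ G.map ψ := by
  have key : (negGlueData G hG).functor.map ((lastNeg R).map ψ) =
      G.map (negPtMap _ (ψ.2 (Fin.last P.n))) ≫ negZig G hG _ (Q.negMap _) :=
    (negGlueData G hG).functor_map_pos_comp_neg _ _ _ _
  have h₁ : G.map (negTgt _ _) ≫ G.map (Q.lastEdge _) = G.map Q.lastIncl :=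
    (G.map_comp _ _).symm.trans (congrArg G.map (negTgt_comp_lastEdge Q (ψ.1.α (Fin.last P.n))))
  have h₂ : G.map (negPtMap _ _) ≫ G.map (negSrc _ _) ≫ G.map (Q.lastEdge _) =
      G.map P.lastIncl ≫ G.map ψ :=
    ((congrArg (_ ≫ ·) (G.map_comp _ _).symm).trans (G.map_comp _ _).symm).trans
      ((congrArg G.map (negPtMap_comp_negSrc_comp_lastEdge ψ)).trans (G.map_comp _ _))
  rw [key]
  exact zigzag_comp_eq _ _ _ _ _ _ h₁ h₂ (hv := hG _ (isIdMor_lastNeg_map_negTgt _ _))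

end NegLocalization

theorem exists_lastNeg_comp_iso {E : Type u₂} [Category.{v₂} E] (G : NegObj R ⥤ E)
    (hG : (lastWeq (lastNeg R)).IsInvertedBy G) : ∃ H : C ⥤ E, Nonempty (lastNeg R ⋙ H ≅ G) :=
  ⟨(negGlueData G hG).functor, ⟨NatIso.ofComponents
    (fun P => @asIso _ _ _ _ (G.map P.lastIncl) (hG _ (isIdMor_lastNeg_map_lastIncl P)))
    (negGlueData_functor_map_lastNeg_map G hG)⟩⟩

theorem whiskerUnique_lastNeg : WhiskerUnique.{v₂, u₂} (lastNeg R) :=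
  whiskerUnique_of_section _ (negPt R) (fun _ => rfl)
    (fun P => ⟨P.lastIncl, isIdMor_lastNeg_map_lastIncl P⟩) fun f => by
      obtain ⟨⟨z, g, h⟩, ⟨hg, hh, rfl⟩, -⟩ := R.factor_existsUnique f
      have hsrc := MorphismProperty.map_mem_strictMap ⊤ (lastNeg R) (negSrc g hg) trivial
      have hpt := MorphismProperty.map_mem_strictMap ⊤ (lastNeg R) (negPtMap h hh) trivial
      rw [lastNeg_map_negSrc] at hsrc
      rw [lastNeg_map_negPtMap] at hpt
      exact .comp_of _ _ (.of _ hsrc) hpt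

theorem isWeakLocalizationAtLastWeq_lastNeg : IsWeakLocalizationAtLastWeq.{v₂, u₂} (lastNeg R) :=
  isWeakLocalizationAtLastWeq_of _ whiskerUnique_lastNeg exists_lastNeg_comp_iso

instance : (qStar R).Full where
  map_surjective f := Quot.inductionOn f fun f' => ⟨f', rfl⟩

theorem isWeakLocalizationAtLastWeq_lastDownStar :
    IsWeakLocalizationAtLastWeq.{v₂, u₂} (lastDownStar R) :=
  isWeakLocalizationAtLastWeq_of_comp (qStar R) DownStar.obj (fun _ => rfl) _ whiskerUnique_lastNeg
    fun _ hG => exists_lastNeg_comp_iso _ fun _ _ f hf => hG ((qStar R).map f) hf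

/-! ### Identity-reflecting chains and `Down(C) ⥤ C` -/

section StrictChains

variable (R) in
def strictPt (c : C) : StrictObj R :=
  ⟨negPt R c, fun {i j} _ _ => Subsingleton.elim (α := Fin 1) i j⟩

def strictArrow {x z : C} (g : x ⟶ z) (hg : R.neg g) (hni : ¬IsIdMor g) : StrictObj R :=
  ⟨negArrow g hg, fun {i j} h hid => by
    fin_cases i <;> fin_cases j
    · rfl
    · exact absurd hid hni
    · simp [negArrow] at h
    · rfl⟩

def strictTwoArrows {x z z' : C} (g : x ⟶ z) (g' : z ⟶ z') (hg : R.neg g) (hg' : R.neg g')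
    (hni : ¬IsIdMor g) (hni' : ¬IsIdMor g') : StrictObj R :=
  ⟨negTwoArrows g g' hg hg', fun {i j} h hid => by
    fin_cases i <;> fin_cases j
    all_goals first
      | rfl
      | exact absurd hid hni
      | exact absurd hid hni'
      | exact absurd hid (R.not_isIdMor_comp hg hg' hni hni')
      | simp [negTwoArrows] at h⟩

theorem injective_negPt_hom {x : C} {Q : NegObj R} (f : negPt R x ⟶ Q) :
    Function.Injective f.1.α :=
  fun a b _ => Subsingleton.elim (α := Fin 1) a b

theorem injective_negArrowHom {x z : C} {g : x ⟶ z} (hg : R.neg g) {Q : NegObj R}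
    {i j : Fin (Q.n + 1)} (hij : i ≤ j) (e : Arrow.mk g = Arrow.mk (Q.X.map (homOfLE hij)))
    (hne : i ≠ j) : Function.Injective (negArrowHom hg i j hij e).1.α := by
  intro a b hab
  fin_cases a <;> fin_cases b
  · rfl
  · exact absurd hab hne
  · exact absurd hab.symm hne
  · rfl

def strictPtMap {x y : C} (h : x ⟶ y) (hh : R.pos h) : strictPt R x ⟶ strictPt R y :=
  ⟨negPtMap h hh, injective_negPt_hom _⟩

def StrictObj.lastIncl (P : StrictObj R) :
    strictPt R (P.toNegObj.X.obj (Fin.last P.toNegObj.n)) ⟶ P :=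
  ⟨P.toNegObj.lastIncl, injective_negPt_hom _⟩

section Arrow

variable {x z : C} (g : x ⟶ z) (hg : R.neg g) (hni : ¬IsIdMor g)

def strictSrc : strictPt R x ⟶ strictArrow g hg hni := ⟨negSrc g hg, injective_negPt_hom _⟩

def strictTgt : strictPt R z ⟶ strictArrow g hg hni := ⟨negTgt g hg, injective_negPt_hom _⟩

theorem isIdMor_lastStrict_map_strictTgt : IsIdMor ((lastStrict R).map (strictTgt g hg hni)) :=
  isIdMor_lastNeg_map_negTgt g hg

end Arrow

section Faces

variable {x z z' : C} (g : x ⟶ z) (g' : z ⟶ z') (hg : R.neg g) (hg' : R.neg g')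
  (hni : ¬IsIdMor g) (hni' : ¬IsIdMor g')

def strictFace₀ : strictArrow g' hg' hni' ⟶ strictTwoArrows g g' hg hg' hni hni' :=
  ⟨negFace₀ g g' hg hg', injective_negArrowHom _ _ _ (show (1 : Fin 3) ≠ 2 by decide)⟩

def strictFace₁ :
    strictArrow (g ≫ g') (R.neg_comp _ _ hg hg') (R.not_isIdMor_comp hg hg' hni hni') ⟶
      strictTwoArrows g g' hg hg' hni hni' :=
  ⟨negFace₁ g g' hg hg', injective_negArrowHom _ _ _ (show (0 : Fin 3) ≠ 2 by decide)⟩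

def strictFace₂ : strictArrow g hg hni ⟶ strictTwoArrows g g' hg hg' hni hni' :=
  ⟨negFace₂ g g' hg hg', injective_negArrowHom _ _ _ (show (0 : Fin 3) ≠ 1 by decide)⟩

theorem strictSrc_comp_strictFace₂ :
    strictSrc g hg hni ≫ strictFace₂ g g' hg hg' hni hni' =
      strictSrc _ _ (R.not_isIdMor_comp hg hg' hni hni') ≫ strictFace₁ g g' hg hg' hni hni' :=
  Subtype.ext (negSrc_comp_negFace₂ g g' hg hg')

theorem strictTgt_comp_strictFace₂ :
    strictTgt g hg hni ≫ strictFace₂ g g' hg hg' hni hni' =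
      strictSrc g' hg' hni' ≫ strictFace₀ g g' hg hg' hni hni' :=
  Subtype.ext (negTgt_comp_negFace₂ g g' hg hg')

theorem strictTgt_comp_strictFace₀ :
    strictTgt g' hg' hni' ≫ strictFace₀ g g' hg hg' hni hni' =
      strictTgt _ _ (R.not_isIdMor_comp hg hg' hni hni') ≫ strictFace₁ g g' hg hg' hni hni' :=
  Subtype.ext (negTgt_comp_negFace₀ g g' hg hg')

end Faces

def StrictObj.lastEdge (Q : StrictObj R) (j : Fin (Q.toNegObj.n + 1))
    (hni : ¬IsIdMor (Q.toNegObj.X.map (homOfLE (Fin.le_last j)))) :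
    strictArrow _ (Q.toNegObj.negMap _) hni ⟶ Q :=
  ⟨Q.toNegObj.lastEdge j, injective_negArrowHom _ _ _ fun hj =>
    hni ⟨congrArg Q.toNegObj.X.obj hj, map_eq_eqToHom _ _ hj⟩⟩

section Square

variable {x y z w : C} {h : x ⟶ y} {g : y ⟶ z} {g' : x ⟶ w} {h' : w ⟶ z} (hh : R.pos h)
  (hg : R.neg g) (hg' : R.neg g') (hh' : R.pos h') (sq : h ≫ g = g' ≫ h') (hni : ¬IsIdMor g)
  (hni' : ¬IsIdMor g')

def strictSquare : strictArrow g' hg' hni' ⟶ strictArrow g hg hni :=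
  ⟨negSquare hh hg hg' hh' sq, fun _ _ h => h⟩

theorem strictPtMap_comp_strictSrc :
    strictPtMap h hh ≫ strictSrc g hg hni =
      strictSrc g' hg' hni' ≫ strictSquare hh hg hg' hh' sq hni hni' :=
  Subtype.ext (negPtMap_comp_negSrc hh hg hg' hh' sq)

theorem strictPtMap_comp_strictTgt :
    strictPtMap h' hh' ≫ strictTgt g hg hni =
      strictTgt g' hg' hni' ≫ strictSquare hh hg hg' hh' sq hni hni' :=
  Subtype.ext (negPtMap_comp_negTgt hh hg hg' hh' sq)

end Square

end StrictChains

section StrictLocalization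

variable {E : Type u₂} [Category.{v₂} E] (G : StrictObj R ⥤ E)
  (hG : (lastWeq (lastStrict R)).IsInvertedBy G)

-- An identity has no identity-reflecting chain `[x → z]`, so it is sent to an identity directly.
open Classical in
noncomputable def strictZig {x z : C} (g : x ⟶ z) (hg : R.neg g) :
    G.obj (strictPt R x) ⟶ G.obj (strictPt R z) :=
  if hid : IsIdMor g then eqToHom (congrArg (fun c => G.obj (strictPt R c)) hid.choose)
  else
    letI := hG _ (isIdMor_lastStrict_map_strictTgt g hg hid)
    G.map (strictSrc g hg hid) ≫ inv (G.map (strictTgt g hg hid))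

theorem strictZig_eqToHom {x z : C} (e : x = z) (hg : R.neg (eqToHom e)) :
    strictZig G hG (eqToHom e) hg = eqToHom (congrArg (fun c => G.obj (strictPt R c)) e) :=
  dif_pos ⟨e, rfl⟩

theorem strictZig_of_not_isIdMor {x z : C} {g : x ⟶ z} (hg : R.neg g) (hni : ¬IsIdMor g)
    [IsIso (G.map (strictTgt g hg hni))] :
    strictZig G hG g hg = G.map (strictSrc g hg hni) ≫ inv (G.map (strictTgt g hg hni)) :=
  dif_neg hni

theorem strictZig_congr {x z : C} {g g' : x ⟶ z} (e : g = g') (hg : R.neg g) (hg' : R.neg g') :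
    strictZig G hG g hg = strictZig G hG g' hg' := by
  subst e
  rfl

theorem strictZig_id (x : C) : strictZig G hG (𝟙 x) (R.neg_id x) = 𝟙 _ :=
  (strictZig_congr G hG (eqToHom_refl x rfl).symm _ (by simpa using R.neg_id x)).trans
    (strictZig_eqToHom G hG rfl _)

theorem strictZig_comp {x z z' : C} (g : x ⟶ z) (g' : z ⟶ z') (hg : R.neg g) (hg' : R.neg g') :
    strictZig G hG (g ≫ g') (R.neg_comp _ _ hg hg') =
      strictZig G hG g hg ≫ strictZig G hG g' hg' := by
  by_cases hni : IsIdMor g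
  · obtain ⟨rfl, rfl⟩ := hni
    rw [strictZig_congr G hG (by simp : eqToHom rfl ≫ g' = g') _ hg', strictZig_eqToHom,
      eqToHom_refl, Category.id_comp]
  by_cases hni' : IsIdMor g'
  · obtain ⟨rfl, rfl⟩ := hni'
    rw [strictZig_congr G hG (by simp : g ≫ eqToHom rfl = g) _ hg, strictZig_eqToHom,
      eqToHom_refl, Category.comp_id]
  have hni₁₂ := R.not_isIdMor_comp hg hg' hni hni'
  have := hG _ (isIdMor_lastStrict_map_strictTgt g hg hni)
  have := hG _ (isIdMor_lastStrict_map_strictTgt g' hg' hni')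
  have := hG _ (isIdMor_lastStrict_map_strictTgt _ (R.neg_comp _ _ hg hg') hni₁₂)
  have := hG (strictFace₀ g g' hg hg' hni hni') (isIdMor_lastNeg_map_negMk _ _ _ rfl)
  have := hG (strictFace₁ g g' hg hg' hni hni') (isIdMor_lastNeg_map_negMk _ _ _ rfl)
  have h₀ := congrArg G.map (strictSrc_comp_strictFace₂ g g' hg hg' hni hni')
  have h₁ := congrArg G.map (strictTgt_comp_strictFace₂ g g' hg hg' hni hni')
  have h₂ := congrArg G.map (strictTgt_comp_strictFace₀ g g' hg hg' hni hni')
  simp only [G.map_comp] at h₀ h₁ h₂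
  rw [strictZig_of_not_isIdMor G hG hg hni, strictZig_of_not_isIdMor G hG hg' hni',
    strictZig_of_not_isIdMor G hG _ hni₁₂]
  simpa only [Category.assoc] using zigzag_comp _ _ _ _ _ _ _ _ _ h₀ h₁ h₂

theorem strictZig_square
    (hGle : ∀ {P Q : StrictObj R} {a b : P ⟶ Q}, StrictHom.le a b → G.map a = G.map b)
    {x y z w : C} {h : x ⟶ y} {g : y ⟶ z} {g' : x ⟶ w} {h' : w ⟶ z}
    (hh : R.pos h) (hg : R.neg g) (hg' : R.neg g') (hh' : R.pos h') (sq : h ≫ g = g' ≫ h') :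
    strictZig G hG g' hg' ≫ G.map (strictPtMap h' hh') =
      G.map (strictPtMap h hh) ≫ strictZig G hG g hg := by
  by_cases hni' : IsIdMor g'
  · obtain ⟨rfl, rfl⟩ := hni'
    rw [strictZig_eqToHom, eqToHom_refl, Category.id_comp]
    by_cases hni : IsIdMor g
    · obtain ⟨rfl, rfl⟩ := hni
      obtain rfl : h = h' := by simpa using sq
      rw [strictZig_eqToHom, eqToHom_refl, Category.comp_id]
    have := hG _ (isIdMor_lastStrict_map_strictTgt g hg hni)
    have hle : StrictHom.le (strictPtMap h hh ≫ strictSrc g hg hni)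
        (strictPtMap h' hh' ≫ strictTgt g hg hni) :=
      negPtMap_comp_negSrc_le hh hg hh' (by simpa using sq)
    rw [strictZig_of_not_isIdMor G hG hg hni, ← Category.assoc, ← G.map_comp, hGle hle,
      G.map_comp, Category.assoc, IsIso.hom_inv_id, Category.comp_id]
  have hni : ¬IsIdMor g := fun hni => hni' (by
    obtain ⟨rfl, rfl⟩ := hni
    exact R.isIdMor_of_comp_eq_pos hg' hh' hh (by simpa using sq.symm))
  have := hG _ (isIdMor_lastStrict_map_strictTgt g hg hni)
  have := hG _ (isIdMor_lastStrict_map_strictTgt g' hg' hni')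
  have h₁ := congrArg G.map (strictPtMap_comp_strictSrc hh hg hg' hh' sq hni hni')
  have h₂ := congrArg G.map (strictPtMap_comp_strictTgt hh hg hg' hh' sq hni hni')
  simp only [G.map_comp] at h₁ h₂
  rw [strictZig_of_not_isIdMor G hG hg hni, strictZig_of_not_isIdMor G hG hg' hni']
  simpa only [Category.assoc] using zigzag_square _ _ _ _ _ _ _ h₁ h₂

variable (hGle : ∀ {P Q : StrictObj R} {a b : P ⟶ Q}, StrictHom.le a b → G.map a = G.map b)

noncomputable def strictGlueData : R.GlueData E where
  obj c := G.obj (strictPt R c)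
  pos h hh := G.map (strictPtMap h hh)
  neg := strictZig G hG
  pos_id x := by
    rw [show strictPtMap (𝟙 x) (R.pos_id x) = 𝟙 _ from Subtype.ext (negPtMap_id x), G.map_id]
  neg_id := strictZig_id G hG
  pos_comp h h' hh hh' := by
    rw [show strictPtMap (h ≫ h') _ = strictPtMap h hh ≫ strictPtMap h' hh' from
      Subtype.ext (negPtMap_comp h h' hh hh'), G.map_comp]
  neg_comp := strictZig_comp G hG
  square _ _ _ _ hh hg hg' hh' sq := strictZig_square G hG hGle hh hg hg' hh' sq

theorem strictGlueData_functor_map_lastStrict_map {P Q : StrictObj R} (ψ : P ⟶ Q) :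
    (strictGlueData G hG hGle).functor.map ((lastStrict R).map ψ) ≫ G.map Q.lastIncl =
      G.map P.lastIncl ≫ G.map ψ := by
  by_cases hν : IsIdMor
      (Q.toNegObj.X.map (homOfLE (Fin.le_last (ψ.1.1.α (Fin.last P.toNegObj.n)))))
  · have hpos : R.pos ((lastStrict R).map ψ) := R.pos_comp _ _ (ψ.1.2 _) (R.pos_of_isIdMor hν)
    rw [(strictGlueData G hG hGle).functor_map_pos _ hpos]
    exact (G.map_comp _ _).symm.trans ((congrArg G.map (Subtype.ext
      (negPtMap_lastNeg_map_comp_lastIncl ψ.1 (Q.idRefl _ hν) hpos))).trans (G.map_comp _ _))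
  have := hG _ (isIdMor_lastStrict_map_strictTgt _ (Q.toNegObj.negMap _) hν)
  have key : (strictGlueData G hG hGle).functor.map ((lastStrict R).map ψ) =
      G.map (strictPtMap _ (ψ.1.2 (Fin.last P.toNegObj.n))) ≫
        G.map (strictSrc _ _ hν) ≫ inv (G.map (strictTgt _ _ hν)) :=
    ((strictGlueData G hG hGle).functor_map_pos_comp_neg _ _ _ _).trans
      (congrArg (_ ≫ ·) (strictZig_of_not_isIdMor G hG _ hν))
  have h₁ : G.map (strictTgt _ _ hν) ≫ G.map (Q.lastEdge _ hν) = G.map Q.lastIncl :=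
    (G.map_comp _ _).symm.trans (congrArg G.map (Subtype.ext (negTgt_comp_lastEdge Q.toNegObj _)))
  have h₂ : G.map (strictPtMap _ _) ≫ G.map (strictSrc _ _ hν) ≫ G.map (Q.lastEdge _ hν) =
      G.map P.lastIncl ≫ G.map ψ :=
    ((congrArg (_ ≫ ·) (G.map_comp _ _).symm).trans (G.map_comp _ _).symm).trans
      ((congrArg G.map (Subtype.ext (negPtMap_comp_negSrc_comp_lastEdge ψ.1))).trans
        (G.map_comp _ _))
  rw [key]
  exact zigzag_comp_eq _ _ _ _ _ _ h₁ h₂ (hv := this)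

end StrictLocalization

theorem exists_lastStrict_comp_iso {E : Type u₂} [Category.{v₂} E] (G : StrictObj R ⥤ E)
    (hG : (lastWeq (lastStrict R)).IsInvertedBy G)
    (hGle : ∀ {P Q : StrictObj R} {a b : P ⟶ Q}, StrictHom.le a b → G.map a = G.map b) :
    ∃ H : C ⥤ E, Nonempty (lastStrict R ⋙ H ≅ G) :=
  ⟨(strictGlueData G hG hGle).functor, ⟨NatIso.ofComponents
    (fun P => @asIso _ _ _ _ (G.map P.lastIncl) (hG _ (isIdMor_lastNeg_map_lastIncl _)))
    (strictGlueData_functor_map_lastStrict_map G hG hGle)⟩⟩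

theorem whiskerUnique_lastStrict : WhiskerUnique.{v₂, u₂} (lastStrict R) :=
  whiskerUnique_of_section _ (strictPt R) (fun _ => rfl)
    (fun P => ⟨P.lastIncl, isIdMor_lastNeg_map_lastIncl _⟩) fun f => by
      obtain ⟨⟨z, g, h⟩, ⟨hg, hh, rfl⟩, -⟩ := R.factor_existsUnique f
      have hpt := MorphismProperty.map_mem_strictMap ⊤ (lastStrict R) (strictPtMap h hh) trivial
      rw [show (lastStrict R).map (strictPtMap h hh) = h from lastNeg_map_negPtMap h hh] at hpt
      by_cases hni : IsIdMor g
      · obtain ⟨rfl, rfl⟩ := hni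
        simpa using MorphismProperty.multiplicativeClosure.of _ hpt
      have hsrc := MorphismProperty.map_mem_strictMap ⊤ (lastStrict R) (strictSrc g hg hni) trivial
      rw [show (lastStrict R).map (strictSrc g hg hni) = g from lastNeg_map_negSrc g hg] at hsrc
      exact .comp_of _ _ (.of _ hsrc) hpt

variable (R) in
def qDown : StrictObj R ⥤ Down R where
  obj P := ⟨P⟩
  map f := Quot.mk _ f
  map_id _ := rfl
  map_comp _ _ := rfl

instance : (qDown R).Full where
  map_surjective f := Quot.inductionOn f fun f' => ⟨f', rfl⟩

theorem isWeakLocalizationAtLastWeq_lastDown : IsWeakLocalizationAtLastWeq.{v₂, u₂} (lastDown R) :=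
  isWeakLocalizationAtLastWeq_of_comp (qDown R) Down.obj (fun _ => rfl) _ whiskerUnique_lastStrict
    fun G hG => exists_lastStrict_comp_iso _ (fun _ _ f hf => hG ((qDown R).map f) hf)
      fun h => congrArg G.map (Quot.sound h)

section Statements

variable (R : ReedyStruct C)

theorem statement19 :
    IsWeakLocalizationAtLastWeq (lastChain (C := C)) ∧
    IsWeakLocalizationAtLastWeq (lastNeg R) ∧
    IsWeakLocalizationAtLastWeq (lastDownStar R) ∧
    IsWeakLocalizationAtLastWeq (lastDown R) :=
  ⟨isWeakLocalizationAtLastWeq_lastChain, isWeakLocalizationAtLastWeq_lastNeg,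
    isWeakLocalizationAtLastWeq_lastDownStar, isWeakLocalizationAtLastWeq_lastDown⟩

end Statements

end ReedyPaper
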